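/- Theorem 6 (Quantifier-Weakening Theorem): Let F : ℝ → ℝ and suppose (i) the set 𝔸_F is dense in ℝ, and (ii) F* satisfies the one-sided Heiberg–Seneta boundedness condition limsup_{u↓0} F*(u) ≤ 0. Then 𝔸_F = ℝ and F* is linear: there exists c ∈ ℝ such that for every u ∈ ℝ the limit lim_{x→+∞}(F(u+x) − F(x)) exists and F*(u) = lim_{x→+∞}(F(u+x) − F(x)) = cu. -/

import Mathlib

open Filter Topology

/-- `AF F` is the set of `u` for which `lim_{x→∞} (F(u+x) - F(x))` exists and is finite. -/
def AF (F : ℝ → ℝ) : Set ℝ :=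
  {u | ∃ L : ℝ, Tendsto (fun x => F (u + x) - F x) atTop (𝓝 L)}

/-- `Fstar F u = limsup_{x→∞} (F(u+x) - F(x))`, with values in the extended reals. -/
noncomputable def Fstar (F : ℝ → ℝ) (u : ℝ) : EReal :=
  limsup (fun x => ((F (u + x) - F x : ℝ) : EReal)) atTop

/-! Since `F(u+v+x) - F(x) = (F(u+(v+x)) - F(v+x)) + (F(v+x) - F(x))`, the set `𝔸_F` is an
additive subgroup of `ℝ` and the limit is additive on it. The Heiberg–Seneta condition bounds this
additive map above on the small positive elements of `𝔸_F`, which (`𝔸_F` being dense) forces it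
to be continuous at `0`. This continuity, together with the eventual smallness of the increments
at small positive shifts, lets us squeeze every `u ∈ ℝ` between nearby points of `𝔸_F`, so
`𝔸_F = ℝ`; a continuous additive map `ℝ → ℝ` is linear. -/

theorem exists_tendsto_of_forall_exists_eventually_dist_lt {α β : Type*} [PseudoMetricSpace α]
    [CompleteSpace α] {l : Filter β} [l.NeBot] {f : β → α}
    (h : ∀ ε > 0, ∃ c, ∀ᶠ x in l, dist (f x) c < ε) : ∃ L, Tendsto f l (𝓝 L) := by
  rw [← cauchy_map_iff_exists_tendsto, Metric.cauchy_iff]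
  refine ⟨map_neBot, fun ε hε => ?_⟩
  obtain ⟨c, hc⟩ := h (ε / 2) (half_pos hε)
  refine ⟨Metric.ball c (ε / 2), hc, fun x hx y hy => ?_⟩
  calc dist x y ≤ dist x c + dist y c := dist_triangle_right x y c
    _ < ε / 2 + ε / 2 := add_lt_add hx hy
    _ = ε := add_halves ε

namespace AddMonoidHom

variable {G : AddSubgroup ℝ} (φ : G →+ ℝ) {w₀ : G} {δ M ε : ℝ}

/-- For `n • w < w₀`, the bound `M` at `n • w` and at `w₀ - n • w` gives
`(φ w₀ - M) / n ≤ φ w ≤ M / n`. -/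
theorem exists_abs_lt_of_pos_of_forall_mem_Ioo_le (hw₀ : (w₀ : ℝ) ∈ Set.Ioo 0 δ)
    (hM : ∀ w : G, (w : ℝ) ∈ Set.Ioo 0 δ → φ w ≤ M) (hε : 0 < ε) :
    ∃ η > 0, ∀ w : G, (w : ℝ) ∈ Set.Ioo 0 η → |φ w| < ε := by
  obtain ⟨n, hn⟩ := exists_nat_gt (max M (M - φ w₀) / ε)
  have hnε : max M (M - φ w₀) < n * ε := (div_lt_iff₀ hε).mp hn
  have hn0 : (0 : ℝ) < n :=
    pos_of_mul_pos_left (by linarith [le_max_right M (M - φ w₀), hM w₀ hw₀]) hε.le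
  refine ⟨w₀ / n, div_pos hw₀.1 hn0, fun w ⟨hw, hwη⟩ => ?_⟩
  have hnw : n * (w : ℝ) < w₀ := (lt_div_iff₀' hn0).mp hwη
  have hnw_pos : 0 < n * (w : ℝ) := mul_pos hn0 hw
  have hcoe₁ : ((n • w : G) : ℝ) = n * w := by simp
  have hcoe₂ : ((w₀ - n • w : G) : ℝ) = w₀ - n * w := by simp
  have upper : n * φ w ≤ M := by
    simpa using hM (n • w) (by rw [hcoe₁]; exact ⟨hnw_pos, hnw.trans hw₀.2⟩)
  have lower : φ w₀ - n * φ w ≤ M := by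
    simpa using hM (w₀ - n • w) (by rw [hcoe₂]; constructor <;> linarith [hw₀.2])
  rw [abs_lt]
  constructor
  · exact lt_of_mul_lt_mul_left (by linarith [le_max_right M (M - φ w₀)]) hn0.le
  · exact lt_of_mul_lt_mul_left (by linarith [le_max_left M (M - φ w₀)]) hn0.le

theorem exists_abs_lt_of_forall_mem_Ioo_le (hw₀ : (w₀ : ℝ) ∈ Set.Ioo 0 δ)
    (hM : ∀ w : G, (w : ℝ) ∈ Set.Ioo 0 δ → φ w ≤ M) (hε : 0 < ε) :
    ∃ η > 0, ∀ w : G, |(w : ℝ)| < η → |φ w| < ε := by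
  obtain ⟨η, hη, hpos⟩ := φ.exists_abs_lt_of_pos_of_forall_mem_Ioo_le hw₀ hM hε
  refine ⟨η, hη, fun w hw => ?_⟩
  rcases lt_trichotomy (w : ℝ) 0 with hneg | hzero | hpos'
  · simpa using hpos (-w) ⟨by simpa using hneg, by simpa using neg_lt.mp (abs_lt.mp hw).1⟩
  · simpa [show w = 0 from Subtype.ext hzero] using hε
  · exact hpos w ⟨hpos', lt_of_abs_lt hw⟩

end AddMonoidHom

section Increment

variable {F : ℝ → ℝ} {u v Lu Lv : ℝ}

theorem tendsto_increment_add (hu : Tendsto (fun x => F (u + x) - F x) atTop (𝓝 Lu))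
    (hv : Tendsto (fun x => F (v + x) - F x) atTop (𝓝 Lv)) :
    Tendsto (fun x => F (u + v + x) - F x) atTop (𝓝 (Lu + Lv)) := by
  have hshift := hu.comp (tendsto_atTop_add_const_left atTop v tendsto_id)
  refine (hshift.add hv).congr fun x => ?_
  simp only [Function.comp_apply, id, add_assoc]
  ring

theorem tendsto_increment_neg (hu : Tendsto (fun x => F (u + x) - F x) atTop (𝓝 Lu)) :
    Tendsto (fun x => F (-u + x) - F x) atTop (𝓝 (-Lu)) := by
  have hshift := (hu.comp (tendsto_atTop_add_const_left atTop (-u) tendsto_id)).neg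
  refine hshift.congr fun x => ?_
  simp

theorem Fstar_eq_of_tendsto (hu : Tendsto (fun x => F (u + x) - F x) atTop (𝓝 Lu)) :
    Fstar F u = Lu :=
  ((continuous_coe_real_ereal.tendsto Lu).comp hu).limsup_eq

theorem exists_forall_mem_Ioo_eventually_increment_lt
    (hHS : limsup (Fstar F) (𝓝[>] (0 : ℝ)) ≤ 0) {ε : ℝ} (hε : 0 < ε) :
    ∃ δ > 0, ∀ t ∈ Set.Ioo 0 δ, ∀ᶠ x in atTop, F (t + x) - F x < ε := by
  have h := eventually_lt_of_limsup_lt (hHS.trans_lt (EReal.coe_pos.mpr hε))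
  obtain ⟨δ, hδ, hsub⟩ := mem_nhdsGT_iff_exists_Ioo_subset.mp h
  refine ⟨δ, hδ, fun t ht => ?_⟩
  have ht' : limsup (fun x => ((F (t + x) - F x : ℝ) : EReal)) atTop < ε := hsub ht
  filter_upwards [eventually_lt_of_limsup_lt ht'] with x hx
  exact_mod_cast hx

end Increment

namespace AF

variable {F : ℝ → ℝ}

def addSubgroup (F : ℝ → ℝ) : AddSubgroup ℝ where
  carrier := AF F
  add_mem' := fun ⟨_, hu⟩ ⟨_, hv⟩ => ⟨_, tendsto_increment_add hu hv⟩
  zero_mem' := ⟨0, by simp⟩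
  neg_mem' := fun ⟨_, hu⟩ => ⟨_, tendsto_increment_neg hu⟩

@[simp]
theorem mem_addSubgroup {u : ℝ} : u ∈ addSubgroup F ↔ u ∈ AF F :=
  Iff.rfl

theorem tendsto_limUnder (u : addSubgroup F) :
    Tendsto (fun x => F (u + x) - F x) atTop
      (𝓝 (limUnder atTop fun x => F (u + x) - F x)) :=
  tendsto_nhds_limUnder (f := atTop) u.2

noncomputable def limit (F : ℝ → ℝ) : addSubgroup F →+ ℝ :=
  AddMonoidHom.mk' (fun u => limUnder atTop fun x => F (u + x) - F x) fun u v =>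
    tendsto_nhds_unique (tendsto_limUnder (u + v))
      (tendsto_increment_add (tendsto_limUnder u) (tendsto_limUnder v))

theorem tendsto_limit (u : addSubgroup F) :
    Tendsto (fun x => F (u + x) - F x) atTop (𝓝 (limit F u)) :=
  tendsto_limUnder u

theorem exists_abs_limit_lt (hdense : Dense (AF F))
    (hHS : limsup (Fstar F) (𝓝[>] (0 : ℝ)) ≤ 0) {ε : ℝ} (hε : 0 < ε) :
    ∃ η > 0, ∀ w : addSubgroup F, |(w : ℝ)| < η → |limit F w| < ε := by
  obtain ⟨δ, hδ, hsmall⟩ := exists_forall_mem_Ioo_eventually_increment_lt hHS one_pos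
  obtain ⟨w₀, hw₀, hw₀δ⟩ := hdense.exists_mem_open isOpen_Ioo (Set.nonempty_Ioo.mpr hδ)
  refine (limit F).exists_abs_lt_of_forall_mem_Ioo_le (w₀ := ⟨w₀, hw₀⟩) (M := 1) hw₀δ
    (fun w hw => ?_) hε
  exact le_of_tendsto (tendsto_limit w) ((hsmall w hw).mono fun _ => le_of_lt)

/-- Squeeze `u` between nearby `v₁ < u < v₂` in `𝔸_F`: the increments at the small shifts
`u - v₁` and `v₂ - u` are eventually small, and so is `limit F v₂ - limit F v₁`; hence the
increment at `u` is eventually close to `limit F v₁`. -/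
theorem eq_univ (hdense : Dense (AF F)) (hHS : limsup (Fstar F) (𝓝[>] (0 : ℝ)) ≤ 0) :
    AF F = Set.univ := by
  refine Set.eq_univ_of_forall fun u => exists_tendsto_of_forall_exists_eventually_dist_lt
    fun ε hε => ?_
  have hε3 : 0 < ε / 3 := by positivity
  obtain ⟨δ₁, hδ₁, hsmall⟩ := exists_forall_mem_Ioo_eventually_increment_lt hHS hε3
  obtain ⟨δ₂, hδ₂, hgap⟩ := exists_abs_limit_lt hdense hHS hε3
  obtain ⟨δ, hδ, hδδ₁, hδδ₂⟩ : ∃ δ > 0, δ ≤ δ₁ ∧ 2 * δ ≤ δ₂ :=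
    ⟨min δ₁ (δ₂ / 2), by positivity, min_le_left _ _, by linarith [min_le_right δ₁ (δ₂ / 2)]⟩
  obtain ⟨v₁, hv₁, hv₁u, hv₁u'⟩ :=
    hdense.exists_mem_open isOpen_Ioo (Set.nonempty_Ioo.mpr (sub_lt_self u hδ))
  obtain ⟨v₂, hv₂, huv₂, huv₂'⟩ :=
    hdense.exists_mem_open isOpen_Ioo (Set.nonempty_Ioo.mpr (lt_add_of_pos_right u hδ))
  let w₁ : addSubgroup F := ⟨v₁, hv₁⟩
  let w₂ : addSubgroup F := ⟨v₂, hv₂⟩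
  have hw₁ : Tendsto (fun x => F (v₁ + x) - F x) atTop (𝓝 (limit F w₁)) := tendsto_limit w₁
  have hw₂ : Tendsto (fun x => F (v₂ + x) - F x) atTop (𝓝 (limit F w₂)) := tendsto_limit w₂
  have upper : ∀ᶠ x in atTop, F (u + x) - F x < limit F w₁ + 2 * (ε / 3) := by
    have h₁ := (tendsto_atTop_add_const_left atTop v₁ tendsto_id).eventually
      (hsmall (u - v₁) ⟨by linarith, by linarith⟩)
    filter_upwards [h₁, hw₁.eventually_lt_const (lt_add_of_pos_right _ hε3)] with x hx₁ hx₂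
    rw [id, show u - v₁ + (v₁ + x) = u + x by ring] at hx₁
    linarith
  have lower : ∀ᶠ x in atTop, limit F w₂ - 2 * (ε / 3) < F (u + x) - F x := by
    have h₂ := (tendsto_atTop_add_const_left atTop u tendsto_id).eventually
      (hsmall (v₂ - u) ⟨by linarith, by linarith⟩)
    filter_upwards [h₂, hw₂.eventually_const_lt (sub_lt_self _ hε3)] with x hx₁ hx₂
    rw [id, show v₂ - u + (u + x) = v₂ + x by ring] at hx₁
    linarith
  have hgap₁₂ : |limit F w₂ - limit F w₁| < ε / 3 := by
    rw [← map_sub]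
    exact hgap (w₂ - w₁) (by rw [AddSubgroup.coe_sub, abs_lt]; constructor <;> linarith)
  refine ⟨limit F w₁, ?_⟩
  filter_upwards [upper, lower] with x hx₁ hx₂
  rw [Real.dist_eq, abs_lt]
  constructor <;> linarith [abs_lt.mp hgap₁₂]

end AF

/-- Theorem 6 (Quantifier-Weakening Theorem): if `AF F` is dense and `F*` satisfies the
Heiberg–Seneta condition `limsup_{u↓0} F*(u) ≤ 0`, then `AF F = ℝ` and `F*` is linear,
equal everywhere to the (existing, finite) limit `lim_{x→∞}(F(u+x) − F(x)) = cu`. -/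
theorem theorem6 (F : ℝ → ℝ)
    (hdense : Dense (AF F))
    (hHS : limsup (Fstar F) (𝓝[>] (0 : ℝ)) ≤ 0) :
    AF F = Set.univ ∧ ∃ c : ℝ, ∀ u : ℝ,
      Tendsto (fun x => F (u + x) - F x) atTop (𝓝 (c * u)) ∧
      Fstar F u = ((c * u : ℝ) : EReal) := by
  have hA : AF F = Set.univ := AF.eq_univ hdense hHS
  have hmem (u : ℝ) : u ∈ AF.addSubgroup F := by simp [hA]
  let k : ℝ →+ ℝ := (AF.limit F).comp ((AddMonoidHom.id ℝ).codRestrict _ hmem)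
  have hk (u : ℝ) : Tendsto (fun x => F (u + x) - F x) atTop (𝓝 (k u)) :=
    AF.tendsto_limit ⟨u, hmem u⟩
  have hcont : Continuous k := by
    refine continuous_of_continuousAt_zero k (Metric.continuousAt_iff.mpr fun ε hε => ?_)
    obtain ⟨η, hη, hsmall⟩ := AF.exists_abs_limit_lt hdense hHS hε
    refine ⟨η, hη, fun {u} hu => ?_⟩
    rw [Real.dist_0_eq_abs] at hu
    rw [map_zero, Real.dist_0_eq_abs]
    exact hsmall ⟨u, hmem u⟩ hu
  have hlin (u : ℝ) : k u = k 1 * u := by simpa [mul_comm] using map_real_smul k hcont u 1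
  refine ⟨hA, k 1, fun u => ?_⟩
  rw [← hlin]
  exact ⟨hk u, Fstar_eq_of_tendsto (hk u)⟩
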